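/- In any group G, if b²a = ab² for elements a, b ∈ G, then for every natural number n, [a,b]^(2n+1) = [a·[a,b]^(-n), b]. -/

import Mathlib

/-! Since `b²` commutes with `a`, conjugation by `b` inverts `c = [a,b]`, hence every power of `c`.
Expanding, `[a·c⁻ⁿ, b] = cⁿ · c · b⁻¹c⁻ⁿb = cⁿ · c · cⁿ`. -/

section

variable {G : Type*} [Group G]

theorem commutator_mul_left (x z y : G) :
    (x * z)⁻¹ * y⁻¹ * (x * z) * y = z⁻¹ * (x⁻¹ * y⁻¹ * x * y) * (y⁻¹ * z * y) := by
  group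

theorem conj_commutator_eq_inv_of_sq_mul_comm {a b : G} (h : b ^ 2 * a = a * b ^ 2) :
    b⁻¹ * (a⁻¹ * b⁻¹ * a * b) * b = (a⁻¹ * b⁻¹ * a * b)⁻¹ :=
  calc b⁻¹ * (a⁻¹ * b⁻¹ * a * b) * b = b⁻¹ * a⁻¹ * b⁻¹ * (a * b ^ 2) := by rw [sq]; group
    _ = b⁻¹ * a⁻¹ * b⁻¹ * (b ^ 2 * a) := by rw [h]
    _ = (a⁻¹ * b⁻¹ * a * b)⁻¹ := by rw [sq]; group

theorem conj_zpow_eq_zpow_neg_of_conj_eq_inv {b c : G} (h : b⁻¹ * c * b = c⁻¹) (k : ℤ) :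
    b⁻¹ * c ^ k * b = c ^ (-k) := by
  have hconj := conj_zpow (a := b⁻¹) (b := c) (i := k)
  rw [inv_inv] at hconj
  rw [← hconj, h, inv_zpow, zpow_neg]

end

/-- If `b²a = ab²`, then `[a,b]^(2n+1) = [a·[a,b]⁻ⁿ, b]`, where `[x,y] = x⁻¹y⁻¹xy`. -/
theorem comm_pow_odd {G : Type*} [Group G] (a b : G) (h : b ^ 2 * a = a * b ^ 2)
    (n : ℕ) :
    (a⁻¹ * b⁻¹ * a * b) ^ (2 * n + 1) =
      (a * (a⁻¹ * b⁻¹ * a * b) ^ (-(n : ℤ)))⁻¹ * b⁻¹ *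
        (a * (a⁻¹ * b⁻¹ * a * b) ^ (-(n : ℤ))) * b := by
  rw [commutator_mul_left, conj_zpow_eq_zpow_neg_of_conj_eq_inv
    (conj_commutator_eq_inv_of_sq_mul_comm h), neg_neg]
  generalize a⁻¹ * b⁻¹ * a * b = c
  group
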